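/- arXiv:1909.05891 — 5 statements merged into one kernel-verified Lean document; each statement's English description precedes it below -/
import Mathlib

section
/- Let a > 0 and c > 0 and set x₀ = (exp(√(1 + c) − 1) − 1)/a. Let X be an integrable random variable with X ≥ x₀ almost surely. Then E[ exp( −c / log(1 + a·X) ) ] ≤ exp( −c / log(1 + a·E[X]) ). -/
open MeasureTheory

private lemma lst_aux_concave (a c : ℝ) (ha : 0 < a) (hc : 0 < c) :
    ConcaveOn ℝ (Set.Ici ((Real.exp (Real.sqrt (1 + c) - 1) - 1) / a))
      (fun x => Real.exp (-c / Real.log (1 + a * x))) := by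
  set m : ℝ := Real.sqrt (1 + c) - 1 with hm_def
  have hm : 0 < m := by
    have h1 : (1:ℝ) < Real.sqrt (1 + c) :=
      (Real.lt_sqrt (by norm_num)).2 (by nlinarith)
    simp only [hm_def]; linarith
  set x₀ : ℝ := (Real.exp m - 1) / a with hx0_def
  -- basic facts for x ≥ x₀ (indeed x > some bound)
  have hexp1 : (1:ℝ) < Real.exp m := by
    calc (1:ℝ) = Real.exp 0 := by simp
    _ < Real.exp m := Real.exp_lt_exp.2 hm
  have hbase : ∀ x : ℝ, x₀ ≤ x → Real.exp m ≤ 1 + a * x := by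
    intro x hx
    have : a * x₀ ≤ a * x := mul_le_mul_of_nonneg_left hx ha.le
    have hax0 : a * x₀ = Real.exp m - 1 := by
      rw [hx0_def]; field_simp
    linarith [hax0 ▸ this]
  have hv0 : ∀ x : ℝ, x₀ ≤ x → 0 < 1 + a * x := fun x hx =>
    lt_trans one_pos (lt_of_lt_of_le hexp1 (hbase x hx))
  have hLm : ∀ x : ℝ, x₀ ≤ x → m ≤ Real.log (1 + a * x) := by
    intro x hx
    have := Real.log_le_log (Real.exp_pos m) (hbase x hx)
    rwa [Real.log_exp] at this
  have hL0 : ∀ x : ℝ, x₀ ≤ x → 0 < Real.log (1 + a * x) := fun x hx =>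
    lt_of_lt_of_le hm (hLm x hx)
  -- derivative formulas
  have hderiv : ∀ x : ℝ, x₀ < x →
      HasDerivAt (fun y => Real.exp (-c / Real.log (1 + a * y)))
        (Real.exp (-c / Real.log (1 + a * x)) *
          (c * a * ((1 + a * x) * (Real.log (1 + a * x)) ^ 2)⁻¹)) x := by
    intro x hx
    have hv := hv0 x hx.le
    have hL := hL0 x hx.le
    have h1 : HasDerivAt (fun y : ℝ => 1 + a * y) a x := by
      simpa using ((hasDerivAt_id x).const_mul a).const_add 1
    have hLd : HasDerivAt (fun y => Real.log (1 + a * y)) (a / (1 + a * x)) x :=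
      h1.log hv.ne'
    have hinv : HasDerivAt (fun y => (Real.log (1 + a * y))⁻¹)
        (-(a / (1 + a * x)) / (Real.log (1 + a * x)) ^ 2) x := hLd.inv hL.ne'
    have hh : HasDerivAt (fun y => -c / Real.log (1 + a * y))
        (-c * (-(a / (1 + a * x)) / (Real.log (1 + a * x)) ^ 2)) x := by
      simpa [div_eq_mul_inv] using hinv.const_mul (-c)
    have := hh.exp
    convert this using 1
    field_simp
    try ring
  refine concaveOn_of_hasDerivWithinAt2_nonpos (convex_Ici x₀) ?_
    (f' := fun x => Real.exp (-c / Real.log (1 + a * x)) *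
      (c * a * ((1 + a * x) * (Real.log (1 + a * x)) ^ 2)⁻¹))
    (f'' := fun x => Real.exp (-c / Real.log (1 + a * x)) *
      (a ^ 2 * c * (c - Real.log (1 + a * x) * (Real.log (1 + a * x) + 2)) /
        ((1 + a * x) ^ 2 * (Real.log (1 + a * x)) ^ 4)))
    ?_ ?_ ?_
  · -- continuity
    apply Real.continuous_exp.comp_continuousOn
    apply ContinuousOn.div continuousOn_const
    · exact ContinuousOn.log (by fun_prop) (fun x hx => (hv0 x hx).ne')
    · exact fun x hx => (hL0 x hx).ne'
  · -- first derivative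
    intro x hx
    rw [interior_Ici] at hx
    exact ((hderiv x hx).hasDerivWithinAt)
  · -- second derivative
    intro x hx
    rw [interior_Ici] at hx
    have hv := hv0 x hx.le
    have hL := hL0 x hx.le
    have h1 : HasDerivAt (fun y : ℝ => 1 + a * y) a x := by
      simpa using ((hasDerivAt_id x).const_mul a).const_add 1
    have hLd : HasDerivAt (fun y => Real.log (1 + a * y)) (a / (1 + a * x)) x :=
      h1.log hv.ne'
    have hD : HasDerivAt (fun y => (1 + a * y) * (Real.log (1 + a * y)) ^ 2)
        (a * (Real.log (1 + a * x)) ^ 2 +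
          (1 + a * x) * ((2 : ℕ) * (Real.log (1 + a * x)) ^ 1 * (a / (1 + a * x)))) x :=
      h1.mul (hLd.pow 2)
    have hDne : (1 + a * x) * (Real.log (1 + a * x)) ^ 2 ≠ 0 := by positivity
    have hφ := (hD.inv hDne).const_mul (c * a)
    have hg := hderiv x hx
    have hg' := hg.mul hφ
    rw [interior_Ici]
    apply HasDerivAt.hasDerivWithinAt
    convert hg' using 1
    · rfl
    · rfl
    simp only [Pi.inv_apply]
    have hLne := hL.ne'
    have hvne := hv.ne'
    field_simp
    ring
  · -- nonpositivity
    intro x hx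
    rw [interior_Ici] at hx
    have hv := hv0 x hx.le
    have hL := hL0 x hx.le
    have hLm' := hLm x hx.le
    have hct : c ≤ Real.log (1 + a * x) * (Real.log (1 + a * x) + 2) := by
      have hsq : (m + 1) ^ 2 = 1 + c := by
        have : m + 1 = Real.sqrt (1 + c) := by rw [hm_def]; ring
        rw [this, Real.sq_sqrt (by positivity)]
      nlinarith [hLm x hx.le, hm]
    apply mul_nonpos_of_nonneg_of_nonpos (Real.exp_pos _).le
    apply div_nonpos_of_nonpos_of_nonneg
    · exact mul_nonpos_of_nonneg_of_nonpos (by positivity) (by linarith)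
    · positivity

/-- Jensen upper bound (46) of the paper for the Laplace–Stieltjes transform of the
service time: if `X` is integrable with `X ≥ x₀ = (exp(√(1+c) - 1) - 1)/a` almost surely
(the high-SNR regime, where `x ↦ exp(-c/log(1 + a x))` is concave), then
`E[exp(-c / log(1 + aX))] ≤ exp(-c / log(1 + a E[X]))`. -/
theorem lst_jensen_upper
    {Ω : Type*} [MeasurableSpace Ω] (P : Measure Ω) [IsProbabilityMeasure P]
    (a c : ℝ) (ha : 0 < a) (hc : 0 < c)
    (X : Ω → ℝ) (hXint : Integrable X P)
    (hX0 : ∀ᵐ ω ∂P, (Real.exp (Real.sqrt (1 + c) - 1) - 1) / a ≤ X ω) :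
    ∫ ω, Real.exp (-c / Real.log (1 + a * X ω)) ∂P
      ≤ Real.exp (-c / Real.log (1 + a * ∫ ω, X ω ∂P)) := by
  set x₀ : ℝ := (Real.exp (Real.sqrt (1 + c) - 1) - 1) / a with hx0_def
  have hm : 0 < Real.sqrt (1 + c) - 1 := by
    have h1 : (1:ℝ) < Real.sqrt (1 + c) :=
      (Real.lt_sqrt (by norm_num)).2 (by nlinarith)
    linarith
  have hL0 : ∀ x : ℝ, x₀ ≤ x → 0 < Real.log (1 + a * x) := by
    intro x hx
    have h1 : a * x₀ = Real.exp (Real.sqrt (1 + c) - 1) - 1 := by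
      rw [hx0_def]; field_simp
    have h2 : a * x₀ ≤ a * x := mul_le_mul_of_nonneg_left hx ha.le
    have h3 : Real.exp (Real.sqrt (1 + c) - 1) ≤ 1 + a * x := by linarith
    have h4 := Real.log_le_log (Real.exp_pos _) h3
    rw [Real.log_exp] at h4
    linarith
  have hconc := lst_aux_concave a c ha hc
  have hcont : ContinuousOn (fun x => Real.exp (-c / Real.log (1 + a * x))) (Set.Ici x₀) := by
    apply Real.continuous_exp.comp_continuousOn
    apply ContinuousOn.div continuousOn_const
    · refine ContinuousOn.log (by fun_prop) (fun x hx => ?_)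
      have := hL0 x hx
      intro h; rw [h] at this; simp at this
    · exact fun x hx => (hL0 x hx).ne'
  have hFmeas : Measurable (fun x : ℝ => Real.exp (-c / Real.log (1 + a * x))) := by
    have h1 : Measurable fun x : ℝ => Real.log (1 + a * x) :=
      Real.measurable_log.comp (by fun_prop)
    exact Real.measurable_exp.comp (Measurable.div measurable_const h1)
  have hgXint : Integrable (fun ω => Real.exp (-c / Real.log (1 + a * X ω))) P := by
    refine Integrable.mono' (integrable_const 1)
      (hFmeas.comp_aemeasurable hXint.aemeasurable).aestronglyMeasurable ?_
    filter_upwards [hX0] with ω hω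
    rw [Real.norm_eq_abs, abs_of_pos (Real.exp_pos _)]
    refine Real.exp_le_one_iff.2 ?_
    exact div_nonpos_of_nonpos_of_nonneg (by linarith) (hL0 _ hω).le
  have hX0' : ∀ᵐ ω ∂P, X ω ∈ Set.Ici x₀ := hX0
  have := hconc.le_map_integral hcont isClosed_Ici hX0' hXint hgXint
  simpa using this
end

section
/- Let T be a nonnegative integrable random variable on a probability space and let λ > 0. For complex z with |z| ≤ 1 define f(z) = E[ exp(−λ·(1 − z)·T) ]. Then f maps the closed unit disk into itself, and for every n ∈ ℕ and every |z| ≤ 1, the n-fold iterate f^{∘n} satisfies |1 − f^{∘n}(z)| ≤ (λ·E[T])^n · |1 − z|. -/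
open MeasureTheory

/-- Norm bound `‖1 - exp(-(w t))‖ ≤ ‖w‖ t` for `Re w ≥ 0`, `t ≥ 0`. -/
lemma key_exp_bound (w : ℂ) (hw : 0 ≤ w.re) (t : ℝ) (ht : 0 ≤ t) :
    ‖1 - Complex.exp (-(w * t))‖ ≤ ‖w‖ * t := by
  have hderiv : ∀ s ∈ Set.Icc (0:ℝ) t,
      HasDerivWithinAt (fun s : ℝ => Complex.exp (-(w * s)))
        (Complex.exp (-(w * s)) * (-w)) (Set.Icc 0 t) s := by
    intro s _
    have h1 : HasDerivAt (fun s : ℝ => -(w * (s : ℂ))) (-w) s := by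
      exact (by simpa using ((Complex.ofRealCLM.hasDerivAt (x := s)).const_mul w).neg :
        HasDerivAt (-fun y : ℝ => w * (y : ℂ)) (-w) s)
    exact h1.cexp.hasDerivWithinAt
  have hbound : ∀ s ∈ Set.Icc (0:ℝ) t,
      ‖Complex.exp (-(w * s)) * (-w)‖ ≤ ‖w‖ := by
    intro s hs
    rw [norm_mul, norm_neg]
    have hre : (-(w * (s : ℂ))).re = -(w.re * s) := by
      simp [Complex.mul_re]
    have : ‖Complex.exp (-(w * (s : ℂ)))‖ ≤ 1 := by
      rw [Complex.norm_exp, hre]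
      exact Real.exp_le_one_iff.2 (by nlinarith [hs.1])
    nlinarith [norm_nonneg w]
  have := (convex_Icc (0:ℝ) t).norm_image_sub_le_of_norm_hasDerivWithin_le
    hderiv hbound (Set.left_mem_Icc.2 ht) (Set.right_mem_Icc.2 ht)
  simp only [Complex.ofReal_zero, mul_zero, neg_zero, Complex.exp_zero, sub_zero] at this
  calc ‖1 - Complex.exp (-(w * t))‖ = ‖Complex.exp (-(w * t)) - 1‖ := norm_sub_rev _ _
    _ ≤ ‖w‖ * ‖t‖ := this
    _ = ‖w‖ * t := by rw [Real.norm_of_nonneg ht]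

/-- Iterated contraction estimate for the probability generating function
`f(z) = E[exp(-λ(1-z)T)]` (equations (59)–(63) of the paper): `f` maps the closed unit
disk into itself, and the `n`-fold iterate satisfies
`|1 - f^[n](z)| ≤ (λ E[T])^n |1 - z|`. -/
theorem pgf_iterate_contraction
    {Ω : Type*} [MeasurableSpace Ω] (P : Measure Ω) [IsProbabilityMeasure P]
    (T : Ω → ℝ) (hT0 : ∀ ω, 0 ≤ T ω) (hTint : Integrable T P)
    (lam : ℝ) (hlam : 0 < lam)
    (f : ℂ → ℂ)
    (hf : ∀ z, f z = ∫ ω, Complex.exp (-((lam : ℂ) * (1 - z) * (T ω : ℂ))) ∂P) :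
    (∀ z : ℂ, ‖z‖ ≤ 1 → ‖f z‖ ≤ 1) ∧
      ∀ (n : ℕ) (z : ℂ), ‖z‖ ≤ 1 →
        ‖1 - f^[n] z‖ ≤ (lam * ∫ ω, T ω ∂P) ^ n * ‖1 - z‖ := by
  -- notation
  set c : ℝ := lam * ∫ ω, T ω ∂P with hc
  have hcnonneg : 0 ≤ c := mul_nonneg hlam.le (integral_nonneg hT0)
  have hwre : ∀ z : ℂ, ‖z‖ ≤ 1 → 0 ≤ ((lam : ℂ) * (1 - z)).re := by
    intro z hz
    have hzre : z.re ≤ 1 := le_trans (Complex.re_le_norm z) hz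
    have : ((lam : ℂ) * (1 - z)).re = lam * (1 - z.re) := by
      simp [Complex.mul_re]
    rw [this]
    nlinarith
  have hnormbd : ∀ z : ℂ, ‖z‖ ≤ 1 → ∀ ω : Ω,
      ‖Complex.exp (-((lam : ℂ) * (1 - z) * (T ω : ℂ)))‖ ≤ 1 := by
    intro z hz ω
    rw [Complex.norm_exp]
    have : (-((lam : ℂ) * (1 - z) * (T ω : ℂ))).re
        = -(((lam : ℂ) * (1 - z)).re * T ω) := by
      simp [Complex.mul_re]
    rw [this]
    exact Real.exp_le_one_iff.2 (by nlinarith [hwre z hz, hT0 ω])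
  have hmeas : ∀ z : ℂ, AEStronglyMeasurable
      (fun ω => Complex.exp (-((lam : ℂ) * (1 - z) * (T ω : ℂ)))) P := by
    intro z
    have hcont : Continuous (fun s : ℝ => Complex.exp (-((lam : ℂ) * (1 - z) * (s : ℂ)))) := by
      continuity
    exact hcont.comp_aestronglyMeasurable hTint.aestronglyMeasurable
  have hint : ∀ z : ℂ, ‖z‖ ≤ 1 →
      Integrable (fun ω => Complex.exp (-((lam : ℂ) * (1 - z) * (T ω : ℂ)))) P := by
    intro z hz
    refine (integrable_const (1 : ℝ)).mono' (hmeas z) ?_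
    filter_upwards with ω using hnormbd z hz ω
  -- part 1
  have part1 : ∀ z : ℂ, ‖z‖ ≤ 1 → ‖f z‖ ≤ 1 := by
    intro z hz
    rw [hf z]
    calc ‖∫ ω, Complex.exp (-((lam : ℂ) * (1 - z) * (T ω : ℂ))) ∂P‖
        ≤ ∫ (_ : Ω), (1 : ℝ) ∂P := by
          refine norm_integral_le_of_norm_le (integrable_const 1) ?_
          filter_upwards with ω using hnormbd z hz ω
      _ = 1 := by simp
  -- one-step contraction
  have step : ∀ z : ℂ, ‖z‖ ≤ 1 → ‖1 - f z‖ ≤ c * ‖1 - z‖ := by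
    intro z hz
    have hsub : 1 - f z = ∫ ω, (1 - Complex.exp (-((lam : ℂ) * (1 - z) * (T ω : ℂ)))) ∂P := by
      rw [hf z, integral_sub (integrable_const 1) (hint z hz)]
      simp
    rw [hsub]
    have hnw : ‖(lam : ℂ) * (1 - z)‖ = lam * ‖1 - z‖ := by
      rw [norm_mul, Complex.norm_real, Real.norm_of_nonneg hlam.le]
    calc ‖∫ ω, (1 - Complex.exp (-((lam : ℂ) * (1 - z) * (T ω : ℂ)))) ∂P‖
        ≤ ∫ ω, (lam * ‖1 - z‖) * T ω ∂P := by
          refine norm_integral_le_of_norm_le (hTint.const_mul _) ?_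
          filter_upwards with ω
          have := key_exp_bound ((lam : ℂ) * (1 - z)) (hwre z hz) (T ω) (hT0 ω)
          rw [hnw] at this
          simpa [mul_assoc] using this
      _ = c * ‖1 - z‖ := by
          rw [integral_const_mul, hc]; ring
  refine ⟨part1, ?_⟩
  intro n
  induction n with
  | zero => intro z hz; simp
  | succ n ih =>
    intro z hz
    rw [Function.iterate_succ_apply]
    calc ‖1 - f^[n] (f z)‖ ≤ c ^ n * ‖1 - f z‖ := ih (f z) (part1 z hz)
      _ ≤ c ^ n * (c * ‖1 - z‖) := by
          exact mul_le_mul_of_nonneg_left (step z hz) (pow_nonneg hcnonneg n)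
      _ = c ^ (n + 1) * ‖1 - z‖ := by ring
end

section
/- Let T be a nonnegative integrable random variable on a probability space and let λ > 0 satisfy λ·E[T] < 1. For complex z with |z| ≤ 1 define f(z) = E[ exp(−λ·(1 − z)·T) ]. Then for every z in the closed unit disk, the iterates converge: f^{∘n}(z) → 1 as n → ∞. -/
open MeasureTheory

lemma norm_exp_sub_one_le_of_re_nonpos {w : ℂ} (hw : w.re ≤ 0) :
    ‖Complex.exp w - 1‖ ≤ ‖w‖ := by
  have hD : ∀ t : ℝ, HasDerivAt (fun t : ℝ => Complex.exp (w * t))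
      (Complex.exp (w * t) * w) t := by
    intro t
    have h1 : HasDerivAt (fun t : ℝ => w * (t : ℂ)) w t := by
      simpa using (Complex.ofRealCLM.hasDerivAt (x := t)).const_mul w
    exact h1.cexp
  have key := norm_image_sub_le_of_norm_deriv_le_segment_01'
      (f := fun t : ℝ => Complex.exp (w * t))
      (f' := fun t : ℝ => Complex.exp (w * t) * w) (C := ‖w‖)
      (fun t _ => (hD t).hasDerivWithinAt) ?_
  · simpa using key
  · intro t ht
    rw [norm_mul]
    have : ‖Complex.exp (w * t)‖ ≤ 1 := by
      rw [Complex.norm_exp]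
      apply Real.exp_le_one_iff.mpr
      have : (w * (t : ℂ)).re = w.re * t := by simp [Complex.mul_re]
      rw [this]
      exact mul_nonpos_of_nonpos_of_nonneg hw ht.1
    nlinarith [norm_nonneg w]

/-- Convergence of the iterates `f_n(z) = f^[n](z) → 1` used in the proof of
Proposition 1 of the paper: if `λ E[T] < 1` (subcriticality, implied by the stability
condition (36)), then for every `z` in the closed unit disk the iterates of
`f(z) = E[exp(-λ(1-z)T)]` converge to `1`. -/
theorem pgf_iterates_tendsto_one
    {Ω : Type*} [MeasurableSpace Ω] (P : Measure Ω) [IsProbabilityMeasure P]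
    (T : Ω → ℝ) (hT0 : ∀ ω, 0 ≤ T ω) (hTint : Integrable T P)
    (lam : ℝ) (hlam : 0 < lam) (hstab : lam * ∫ ω, T ω ∂P < 1)
    (f : ℂ → ℂ)
    (hf : ∀ z, f z = ∫ ω, Complex.exp (-((lam : ℂ) * (1 - z) * (T ω : ℂ))) ∂P) :
    ∀ z : ℂ, ‖z‖ ≤ 1 →
      Filter.Tendsto (fun n => f^[n] z) Filter.atTop (nhds 1) := by
  set c : ℝ := lam * ∫ ω, T ω ∂P with hc
  have hET : 0 ≤ ∫ ω, T ω ∂P := integral_nonneg fun ω => hT0 ω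
  have hc0 : 0 ≤ c := mul_nonneg hlam.le hET
  -- re of the exponent is nonpositive
  have hre : ∀ z : ℂ, ‖z‖ ≤ 1 → ∀ ω, (-((lam : ℂ) * (1 - z) * (T ω : ℂ))).re ≤ 0 := by
    intro z hz ω
    have hzre : z.re ≤ 1 := le_trans (Complex.re_le_norm z) hz
    have : (-((lam : ℂ) * (1 - z) * (T ω : ℂ))).re
        = -(lam * (1 - z.re) * T ω) := by
      simp [Complex.mul_re, Complex.sub_re, Complex.ofReal_re, Complex.ofReal_im]
    rw [this]
    exact neg_nonpos_of_nonneg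
      (mul_nonneg (mul_nonneg hlam.le (by linarith)) (hT0 ω))
  have hnorm1 : ∀ z : ℂ, ‖z‖ ≤ 1 → ∀ ω,
      ‖Complex.exp (-((lam : ℂ) * (1 - z) * (T ω : ℂ)))‖ ≤ 1 := by
    intro z hz ω
    rw [Complex.norm_exp]
    exact Real.exp_le_one_iff.mpr (hre z hz ω)
  have hInt : ∀ z : ℂ, ‖z‖ ≤ 1 →
      Integrable (fun ω => Complex.exp (-((lam : ℂ) * (1 - z) * (T ω : ℂ)))) P := by
    intro z hz
    have hmes : AEStronglyMeasurable
        (fun ω => Complex.exp (-((lam : ℂ) * (1 - z) * (T ω : ℂ)))) P := by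
      have hcont : Continuous fun t : ℝ => Complex.exp (-((lam : ℂ) * (1 - z) * (t : ℂ))) :=
        by fun_prop
      exact hcont.comp_aestronglyMeasurable hTint.aestronglyMeasurable
    exact (integrable_const (1 : ℝ)).mono' hmes (Filter.Eventually.of_forall (hnorm1 z hz))
  -- f maps the disk into itself
  have hA : ∀ z : ℂ, ‖z‖ ≤ 1 → ‖f z‖ ≤ 1 := by
    intro z hz
    rw [hf]
    calc ‖∫ ω, Complex.exp (-((lam : ℂ) * (1 - z) * (T ω : ℂ))) ∂P‖
        ≤ 1 * (P Set.univ).toReal :=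
          norm_integral_le_of_norm_le_const (Filter.Eventually.of_forall (hnorm1 z hz))
      _ = 1 := by simp
  -- contraction toward 1
  have hB : ∀ z : ℂ, ‖z‖ ≤ 1 → ‖f z - 1‖ ≤ c * ‖z - 1‖ := by
    intro z hz
    have h1 : f z - 1 = ∫ ω, (Complex.exp (-((lam : ℂ) * (1 - z) * (T ω : ℂ))) - 1) ∂P := by
      rw [hf, integral_sub (hInt z hz) (integrable_const 1)]
      simp
    rw [h1]
    have hptwise : ∀ ω,
        ‖Complex.exp (-((lam : ℂ) * (1 - z) * (T ω : ℂ))) - 1‖ ≤ lam * ‖z - 1‖ * T ω := by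
      intro ω
      refine le_trans (norm_exp_sub_one_le_of_re_nonpos (hre z hz ω)) ?_
      have : ‖-((lam : ℂ) * (1 - z) * (T ω : ℂ))‖ = lam * ‖z - 1‖ * T ω := by
        rw [norm_neg, norm_mul, norm_mul, Complex.norm_real, Complex.norm_real,
          Real.norm_of_nonneg hlam.le, Real.norm_of_nonneg (hT0 ω), norm_sub_rev]
      rw [this]
    calc ‖∫ ω, (Complex.exp (-((lam : ℂ) * (1 - z) * (T ω : ℂ))) - 1) ∂P‖
        ≤ ∫ ω, ‖Complex.exp (-((lam : ℂ) * (1 - z) * (T ω : ℂ))) - 1‖ ∂P :=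
          norm_integral_le_integral_norm _
      _ ≤ ∫ ω, lam * ‖z - 1‖ * T ω ∂P := by
          refine integral_mono ((hInt z hz).sub (integrable_const 1)).norm
            (hTint.const_mul _) hptwise
      _ = lam * ‖z - 1‖ * ∫ ω, T ω ∂P := integral_const_mul _ _
      _ = c * ‖z - 1‖ := by rw [hc]; ring
  intro z hz
  have hiter : ∀ n : ℕ, ‖f^[n] z‖ ≤ 1 ∧ ‖f^[n] z - 1‖ ≤ c ^ n * ‖z - 1‖ := by
    intro n
    induction n with
    | zero => exact ⟨hz, by simp⟩
    | succ n ih =>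
      rw [Function.iterate_succ_apply']
      refine ⟨hA _ ih.1, ?_⟩
      calc ‖f (f^[n] z) - 1‖ ≤ c * ‖f^[n] z - 1‖ := hB _ ih.1
        _ ≤ c * (c ^ n * ‖z - 1‖) := mul_le_mul_of_nonneg_left ih.2 hc0
        _ = c ^ (n + 1) * ‖z - 1‖ := by ring
  have hto0 : Filter.Tendsto (fun n => f^[n] z - 1) Filter.atTop (nhds 0) := by
    refine squeeze_zero_norm (fun n => (hiter n).2) ?_
    have := (tendsto_pow_atTop_nhds_zero_of_lt_one hc0 hstab).mul_const ‖z - 1‖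
    simpa using this
  have := hto0.add_const 1
  simpa using this
end

section
/- (Proposition 1.) Let (Ω, P) be a probability space, T a nonnegative integrable random variable, and λ > 0 with 2·λ·E[T] < 1. Define f(z) = E[ exp(−λ·(1 − z)·T) ] for z ∈ [0,1] (so f maps [0,1] into [0,1]). Let M: Ω → ℕ be integrable with M ≥ 1 almost surely, and define G(z) = E[ z^M ] for z ∈ [0,1]. Let N ≥ 1 be an integer and π₀ ∈ [0,1], and assume the functional equation G(z) = G(f(z))² − π₀·(1 − z^N) holds for all z ∈ [0,1]. Fix z ∈ [0,1] and for each n ∈ ℕ define the finite backward recursion c^{(n)}_n = 1 and c^{(n)}_k = (c^{(n)}_{k+1})² − π₀·(1 − (f^{∘k}(z))^N) for k = n−1, n−2, …, 0, where f^{∘k} is the k-fold iterate of f. Then lim_{n→∞} c^{(n)}_0 = G(z). -/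
open MeasureTheory

lemma aux_one_sub_pow_le (w : ℝ) (h0 : 0 ≤ w) (h1 : w ≤ 1) :
    ∀ m : ℕ, 1 - w ^ m ≤ (m : ℝ) * (1 - w) := by
  intro m
  induction m with
  | zero => simp
  | succ m ih =>
    have hwm0 : 0 ≤ w ^ m := pow_nonneg h0 m
    have hkey : 0 ≤ (1 - w) * (1 - w ^ m) :=
      mul_nonneg (by linarith) (by nlinarith [pow_le_one₀ h0 h1 (n := m)])
    rw [pow_succ]
    push_cast
    nlinarith

/-- Proposition 1 of the paper: under the stability condition `2 λ E[T] < 1`, if the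
probability generating function `G(z) = E[z^M]` of the (a.s. positive) queue length `M`
satisfies the functional equation `G(z) = G(f(z))² - π₀ (1 - z^N)` on `[0,1]`, where
`f(z) = E[exp(-λ(1-z)T)]`, then for any fixed `z ∈ [0,1]` the nested backward recursion
`c⁽ⁿ⁾ₙ = 1`, `c⁽ⁿ⁾ₖ = (c⁽ⁿ⁾ₖ₊₁)² - π₀ (1 - (f^[k](z))^N)` satisfies
`c⁽ⁿ⁾₀ → G(z)` as `n → ∞`. -/
theorem prop1_nested_recursion_converges
    {Ω : Type*} [MeasurableSpace Ω] (P : Measure Ω) [IsProbabilityMeasure P]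
    (T : Ω → ℝ) (hT0 : ∀ ω, 0 ≤ T ω) (hTint : Integrable T P)
    (lam : ℝ) (hlam : 0 < lam) (hstab : 2 * lam * ∫ ω, T ω ∂P < 1)
    (f : ℝ → ℝ)
    (hf : ∀ z, f z = ∫ ω, Real.exp (-(lam * (1 - z) * T ω)) ∂P)
    (M : Ω → ℕ) (hM : Measurable M)
    (hMint : Integrable (fun ω => (M ω : ℝ)) P)
    (hM1 : ∀ᵐ ω ∂P, 1 ≤ M ω)
    (G : ℝ → ℝ) (hG : ∀ z, G z = ∫ ω, z ^ M ω ∂P)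
    (N : ℕ) (hN : 1 ≤ N) (π₀ : ℝ) (hπ₀ : π₀ ∈ Set.Icc (0 : ℝ) 1)
    (heq : ∀ z ∈ Set.Icc (0 : ℝ) 1, G z = (G (f z)) ^ 2 - π₀ * (1 - z ^ N))
    (z : ℝ) (hz : z ∈ Set.Icc (0 : ℝ) 1)
    (c : ℕ → ℕ → ℝ)
    (hcn : ∀ n, c n n = 1)
    (hck : ∀ n k, k < n → c n k = (c n (k + 1)) ^ 2 - π₀ * (1 - (f^[k] z) ^ N)) :
    Filter.Tendsto (fun n => c n 0) Filter.atTop (nhds (G z)) := by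
  obtain ⟨hz0, hz1⟩ := hz
  obtain ⟨hπ0, hπ1⟩ := hπ₀
  set ρ : ℝ := lam * ∫ ω, T ω ∂P with hρ
  have hTnn : 0 ≤ ∫ ω, T ω ∂P := integral_nonneg hT0
  have hρ0 : 0 ≤ ρ := mul_nonneg hlam.le hTnn
  have hρ2 : 2 * ρ < 1 := by
    have : 2 * ρ = 2 * lam * ∫ ω, T ω ∂P := by rw [hρ]; ring
    linarith
  -- integrability of the exponential integrand
  have hexpint : ∀ w : ℝ, 0 ≤ 1 - w →
      Integrable (fun ω => Real.exp (-(lam * (1 - w) * T ω))) P := by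
    intro w hw
    apply Integrable.mono' (integrable_const (1 : ℝ))
    · exact (Real.continuous_exp.comp
        ((continuous_const.mul continuous_id).neg)).comp_aestronglyMeasurable
        hTint.aestronglyMeasurable
    · refine Filter.Eventually.of_forall (fun ω => ?_)
      rw [Real.norm_eq_abs, abs_of_nonneg (Real.exp_pos _).le]
      have h1 : 0 ≤ lam * (1 - w) * T ω :=
        mul_nonneg (mul_nonneg hlam.le hw) (hT0 ω)
      exact Real.exp_le_one_iff.2 (by linarith)
  -- f maps [0,1] to [0,1]
  have hfmem : ∀ w, w ∈ Set.Icc (0:ℝ) 1 → f w ∈ Set.Icc (0:ℝ) 1 := by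
    intro w hw
    rw [hf]
    constructor
    · exact integral_nonneg (fun ω => (Real.exp_pos _).le)
    · calc ∫ ω, Real.exp (-(lam * (1 - w) * T ω)) ∂P
          ≤ ∫ _, (1:ℝ) ∂P := by
            refine integral_mono (hexpint w (by linarith [hw.2])) (integrable_const 1)
              (fun ω => ?_)
            have h1 : 0 ≤ lam * (1 - w) * T ω :=
              mul_nonneg (mul_nonneg hlam.le (by linarith [hw.2])) (hT0 ω)
            exact Real.exp_le_one_iff.2 (by linarith)
        _ = 1 := by simp
  -- contraction estimate for f
  have hfcon : ∀ w, w ∈ Set.Icc (0:ℝ) 1 → 1 - f w ≤ ρ * (1 - w) := by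
    intro w hw
    have hw1 : 0 ≤ 1 - w := by linarith [hw.2]
    rw [hf]
    have h1 : (1:ℝ) - ∫ ω, Real.exp (-(lam * (1 - w) * T ω)) ∂P
        = ∫ ω, (1 - Real.exp (-(lam * (1 - w) * T ω))) ∂P := by
      rw [integral_sub (integrable_const 1) (hexpint w hw1)]; simp
    rw [h1]
    have h2 : ∫ ω, (1 - Real.exp (-(lam * (1 - w) * T ω))) ∂P
        ≤ ∫ ω, lam * (1 - w) * T ω ∂P := by
      refine integral_mono ((integrable_const 1).sub (hexpint w hw1))
        (hTint.const_mul _) (fun ω => ?_)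
      have := Real.add_one_le_exp (-(lam * (1 - w) * T ω))
      dsimp only
      linarith
    have h3 : ∫ ω, lam * (1 - w) * T ω ∂P = (lam * (1 - w)) * ∫ ω, T ω ∂P :=
      integral_const_mul _ _
    rw [h3] at h2
    calc ∫ ω, (1 - Real.exp (-(lam * (1 - w) * T ω))) ∂P
        ≤ (lam * (1 - w)) * ∫ ω, T ω ∂P := h2
      _ = ρ * (1 - w) := by rw [hρ]; ring
  -- integrability of w^M
  have hpowint : ∀ w : ℝ, w ∈ Set.Icc (0:ℝ) 1 → Integrable (fun ω => w ^ M ω) P := by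
    intro w hw
    apply Integrable.mono' (integrable_const (1 : ℝ))
    · exact (measurable_const.pow hM).aestronglyMeasurable
    · refine Filter.Eventually.of_forall (fun ω => ?_)
      rw [Real.norm_eq_abs, abs_of_nonneg (pow_nonneg hw.1 _)]
      exact pow_le_one₀ hw.1 hw.2
  -- G maps [0,1] to [0,1]
  have hGmem : ∀ w, w ∈ Set.Icc (0:ℝ) 1 → G w ∈ Set.Icc (0:ℝ) 1 := by
    intro w hw
    rw [hG]
    constructor
    · exact integral_nonneg (fun ω => pow_nonneg hw.1 _)
    · calc ∫ ω, w ^ M ω ∂P ≤ ∫ _, (1:ℝ) ∂P :=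
          integral_mono (hpowint w hw) (integrable_const 1)
            (fun ω => pow_le_one₀ hw.1 hw.2)
        _ = 1 := by simp
  have hMnn : 0 ≤ ∫ ω, (M ω : ℝ) ∂P := integral_nonneg (fun ω => Nat.cast_nonneg _)
  -- 1 - G w ≤ E[M] (1 - w)
  have hGsub : ∀ w, w ∈ Set.Icc (0:ℝ) 1 →
      1 - G w ≤ (∫ ω, (M ω : ℝ) ∂P) * (1 - w) := by
    intro w hw
    rw [hG]
    have h1 : (1:ℝ) - ∫ ω, w ^ M ω ∂P = ∫ ω, (1 - w ^ M ω) ∂P := by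
      rw [integral_sub (integrable_const 1) (hpowint w hw)]; simp
    rw [h1]
    have h2 : ∫ ω, (1 - w ^ M ω) ∂P ≤ ∫ ω, (M ω : ℝ) * (1 - w) ∂P := by
      refine integral_mono ((integrable_const 1).sub (hpowint w hw))
        (hMint.mul_const _) (fun ω => ?_)
      exact aux_one_sub_pow_le w hw.1 hw.2 (M ω)
    rw [integral_mul_const] at h2
    exact h2
  -- iterates of f
  have hiter : ∀ n : ℕ, f^[n] z ∈ Set.Icc (0:ℝ) 1 ∧ 1 - f^[n] z ≤ ρ ^ n * (1 - z) := by
    intro n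
    induction n with
    | zero => exact ⟨⟨hz0, hz1⟩, by simp⟩
    | succ n ih =>
      rw [Function.iterate_succ_apply']
      refine ⟨hfmem _ ih.1, ?_⟩
      calc 1 - f (f^[n] z) ≤ ρ * (1 - f^[n] z) := hfcon _ ih.1
        _ ≤ ρ * (ρ ^ n * (1 - z)) := mul_le_mul_of_nonneg_left ih.2 hρ0
        _ = ρ ^ (n + 1) * (1 - z) := by ring
  -- bounds on c
  have hcmem : ∀ j n k : ℕ, k + j = n → c n k ∈ Set.Icc (-1:ℝ) 1 := by
    intro j
    induction j with
    | zero =>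
      intro n k h
      have hk : k = n := by omega
      subst hk
      rw [hcn]
      constructor <;> norm_num
    | succ j ih =>
      intro n k h
      have hk : k < n := by omega
      rw [hck n k hk]
      have ha := ih n (k + 1) (by omega)
      have hw := (hiter k).1
      have hwN0 : 0 ≤ (f^[k] z) ^ N := pow_nonneg hw.1 N
      have hwN1 : (f^[k] z) ^ N ≤ 1 := pow_le_one₀ hw.1 hw.2
      have hsq0 : 0 ≤ (c n (k + 1)) ^ 2 := sq_nonneg _
      have hsq1 : (c n (k + 1)) ^ 2 ≤ 1 := by nlinarith [ha.1, ha.2]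
      have hp0 : 0 ≤ π₀ * (1 - (f^[k] z) ^ N) := mul_nonneg hπ0 (by linarith)
      have hp1 : π₀ * (1 - (f^[k] z) ^ N) ≤ 1 := by nlinarith
      constructor <;> linarith
  -- error recursion
  have herr : ∀ j n k : ℕ, k + j = n →
      |c n k - G (f^[k] z)| ≤ 2 ^ j * (1 - G (f^[n] z)) := by
    intro j
    induction j with
    | zero =>
      intro n k h
      have hk : k = n := by omega
      subst hk
      rw [hcn]
      have hGk := hGmem _ (hiter k).1
      rw [abs_of_nonneg (by linarith [hGk.2])]
      norm_num
    | succ j ih =>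
      intro n k h
      have hk : k < n := by omega
      have hGk := heq (f^[k] z) (hiter k).1
      rw [hck n k hk, hGk, ← Function.iterate_succ_apply' f k z]
      have ha := hcmem j n (k + 1) (by omega)
      have hb := hGmem _ (hiter (k + 1)).1
      have hab := ih n (k + 1) (by omega)
      set a := c n (k + 1)
      set b := G (f^[k + 1] z)
      have hrw : a ^ 2 - π₀ * (1 - (f^[k] z) ^ N)
          - (b ^ 2 - π₀ * (1 - (f^[k] z) ^ N)) = (a + b) * (a - b) := by ring
      rw [hrw, abs_mul]
      have hab2 : |a + b| ≤ 2 := abs_le.2 ⟨by linarith [ha.1, hb.1], by linarith [ha.2, hb.2]⟩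
      calc |a + b| * |a - b| ≤ 2 * |a - b| :=
            mul_le_mul_of_nonneg_right hab2 (abs_nonneg _)
        _ ≤ 2 * (2 ^ j * (1 - G (f^[n] z))) := by linarith
        _ = 2 ^ (j + 1) * (1 - G (f^[n] z)) := by ring
  -- final bound
  set C : ℝ := (∫ ω, (M ω : ℝ) ∂P) * (1 - z) with hC
  have hbound : ∀ n, |c n 0 - G z| ≤ C * (2 * ρ) ^ n := by
    intro n
    have h0 := herr n n 0 (by omega)
    simp only [Function.iterate_zero_apply] at h0
    have h1 : 1 - G (f^[n] z) ≤ (∫ ω, (M ω : ℝ) ∂P) * (1 - f^[n] z) :=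
      hGsub _ (hiter n).1
    have h2 : 1 - f^[n] z ≤ ρ ^ n * (1 - z) := (hiter n).2
    have h3 : (2:ℝ) ^ n * (1 - G (f^[n] z))
        ≤ 2 ^ n * ((∫ ω, (M ω : ℝ) ∂P) * (ρ ^ n * (1 - z))) := by
      refine mul_le_mul_of_nonneg_left ?_ (by positivity)
      calc 1 - G (f^[n] z) ≤ (∫ ω, (M ω : ℝ) ∂P) * (1 - f^[n] z) := h1
        _ ≤ (∫ ω, (M ω : ℝ) ∂P) * (ρ ^ n * (1 - z)) :=
            mul_le_mul_of_nonneg_left h2 hMnn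
    have h4 : (2:ℝ) ^ n * ((∫ ω, (M ω : ℝ) ∂P) * (ρ ^ n * (1 - z)))
        = C * (2 * ρ) ^ n := by
      rw [hC, mul_pow]; ring
    calc |c n 0 - G z| ≤ 2 ^ n * (1 - G (f^[n] z)) := h0
      _ ≤ C * (2 * ρ) ^ n := by rw [← h4]; exact h3
  have htend : Filter.Tendsto (fun n => C * (2 * ρ) ^ n) Filter.atTop (nhds 0) := by
    have := (tendsto_pow_atTop_nhds_zero_of_lt_one (by linarith) hρ2).const_mul C
    simpa using this
  have habs : Filter.Tendsto (fun n => |c n 0 - G z|) Filter.atTop (nhds 0) :=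
    squeeze_zero (fun n => abs_nonneg _) hbound htend
  rw [tendsto_iff_dist_tendsto_zero]
  simpa [Real.dist_eq] using habs
end

section
/- Let (Ω, P) be a probability space, let T₁ and T₂ be nonnegative integrable random variables, let λ > 0, and let N ≥ 1 be an integer. For θ ≥ 0 define L₁(θ) = E[ exp(−θ·T₁) ], L₂(θ) = E[ exp(−θ·T₂) ], and W(θ) = (1/N)·∑_{i=1}^{N} (λ/(θ+λ))^{N−i} · (L₁(θ))^{N} · (L₂(θ))^{i−1}. Then W(0) = 1 and lim_{θ→0⁺} (1 − W(θ))/θ = (N−1)/(2λ) + N·E[T₁] + ((N−1)/2)·E[T₂]. -/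
open MeasureTheory Filter

private lemma mul_aux {f g : ℝ → ℝ} {A B : ℝ}
    (hf1 : Tendsto f (nhdsWithin 0 (Set.Ioi 0)) (nhds 1))
    (hg1 : Tendsto g (nhdsWithin 0 (Set.Ioi 0)) (nhds 1))
    (hA : Tendsto (fun θ => (1 - f θ) / θ) (nhdsWithin 0 (Set.Ioi 0)) (nhds A))
    (hB : Tendsto (fun θ => (1 - g θ) / θ) (nhdsWithin 0 (Set.Ioi 0)) (nhds B)) :
    Tendsto (fun θ => f θ * g θ) (nhdsWithin 0 (Set.Ioi 0)) (nhds 1) ∧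
    Tendsto (fun θ => (1 - f θ * g θ) / θ) (nhdsWithin 0 (Set.Ioi 0)) (nhds (A + B)) := by
  constructor
  · simpa using hf1.mul hg1
  · have h : ∀ θ : ℝ, (1 - f θ * g θ) / θ = (1 - f θ) / θ + (1 - g θ) / θ * f θ := by
      intro θ
      by_cases hθ : θ = 0
      · simp [hθ]
      · field_simp
        ring
    exact (by simpa using hA.add (hB.mul hf1) :
      Tendsto (fun θ => (1 - f θ) / θ + (1 - g θ) / θ * f θ) (nhdsWithin 0 (Set.Ioi 0))
        (nhds (A+B))).congr (fun θ => (h θ).symm)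

private lemma pow_aux {f : ℝ → ℝ} {A : ℝ}
    (hf1 : Tendsto f (nhdsWithin 0 (Set.Ioi 0)) (nhds 1))
    (hA : Tendsto (fun θ => (1 - f θ) / θ) (nhdsWithin 0 (Set.Ioi 0)) (nhds A)) (n : ℕ) :
    Tendsto (fun θ => f θ ^ n) (nhdsWithin 0 (Set.Ioi 0)) (nhds 1) ∧
    Tendsto (fun θ => (1 - f θ ^ n) / θ) (nhdsWithin 0 (Set.Ioi 0)) (nhds (n * A)) := by
  induction n with
  | zero => simp [tendsto_const_nhds]
  | succ n ih =>
    have h := mul_aux ih.1 hf1 ih.2 hA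
    constructor
    · exact h.1.congr (fun θ => (pow_succ (f θ) n).symm)
    · have : ((n : ℝ) + 1) * A = n * A + A := by ring
      rw [Nat.cast_succ, this]
      exact h.2.congr (fun θ => by rw [pow_succ])

private lemma gauss (n : ℕ) : ∑ i ∈ Finset.range n, (i : ℝ) = n * (n - 1) / 2 := by
  induction n with
  | zero => simp
  | succ n ih =>
    rw [Finset.sum_range_succ, ih]
    push_cast
    ring

private lemma sum_sub_one (N : ℕ) :
    ∑ i ∈ Finset.Icc 1 N, ((i - 1 : ℕ) : ℝ) = N * (N - 1) / 2 := by
  rw [← Finset.Ico_add_one_right_eq_Icc, Finset.sum_Ico_eq_sum_range]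
  simpa using gauss N

private lemma sum_N_sub (N : ℕ) :
    ∑ i ∈ Finset.Icc 1 N, ((N - i : ℕ) : ℝ) = N * (N - 1) / 2 := by
  rw [← Finset.Ico_add_one_right_eq_Icc, Finset.sum_Ico_eq_sum_range]
  have : ∀ i, N - (1 + i) = N - 1 - i := by omega
  simp_rw [this]
  rw [show N + 1 - 1 = N from rfl, Finset.sum_range_reflect (fun i => ((i : ℕ) : ℝ)) N]
  simpa using gauss N

private lemma exp_int {Ω : Type*} [MeasurableSpace Ω] (P : Measure Ω) [IsProbabilityMeasure P]
    (T : Ω → ℝ) (hT0 : ∀ ω, 0 ≤ T ω) (hTint : Integrable T P) {θ : ℝ} (hθ : 0 ≤ θ) :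
    Integrable (fun ω => Real.exp (-(θ * T ω))) P := by
  apply Integrable.mono' (integrable_const 1)
  · exact (Real.measurable_exp.comp_aemeasurable
      ((hTint.aemeasurable.const_mul θ).neg)).aestronglyMeasurable
  · filter_upwards with ω
    rw [Real.norm_eq_abs, abs_of_nonneg (Real.exp_nonneg _)]
    exact Real.exp_le_one_iff.mpr (neg_nonpos.mpr (mul_nonneg hθ (hT0 ω)))

private lemma lst_slope {Ω : Type*} [MeasurableSpace Ω] (P : Measure Ω) [IsProbabilityMeasure P]
    (T : Ω → ℝ) (hT0 : ∀ ω, 0 ≤ T ω) (hTint : Integrable T P) :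
    Tendsto (fun θ => (1 - ∫ ω, Real.exp (-(θ * T ω)) ∂P) / θ) (nhdsWithin 0 (Set.Ioi 0))
      (nhds (∫ ω, T ω ∂P)) := by
  have key : Tendsto (fun θ => ∫ ω, (1 - Real.exp (-(θ * T ω))) / θ ∂P)
      (nhdsWithin 0 (Set.Ioi 0)) (nhds (∫ ω, T ω ∂P)) := by
    apply tendsto_integral_filter_of_dominated_convergence T
    · filter_upwards [self_mem_nhdsWithin] with θ hθ
      exact ((aemeasurable_const.sub (Real.measurable_exp.comp_aemeasurable
        ((hTint.aemeasurable.const_mul θ).neg))).div aemeasurable_const).aestronglyMeasurable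
    · filter_upwards [self_mem_nhdsWithin] with θ hθ
      filter_upwards with ω
      have hθ' : (0:ℝ) < θ := hθ
      have h1 : Real.exp (-(θ * T ω)) ≤ 1 :=
        Real.exp_le_one_iff.mpr (neg_nonpos.mpr (mul_nonneg hθ'.le (hT0 ω)))
      have h2 : 1 - θ * T ω ≤ Real.exp (-(θ * T ω)) := by
        have := Real.add_one_le_exp (-(θ * T ω))
        linarith
      rw [Real.norm_eq_abs, abs_div, abs_of_pos hθ',
        abs_of_nonneg (by linarith : (0:ℝ) ≤ 1 - Real.exp (-(θ * T ω))),
        div_le_iff₀ hθ']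
      nlinarith [hT0 ω]
    · exact hTint
    · filter_upwards with ω
      have hd : HasDerivAt (fun θ : ℝ => 1 - Real.exp (-(θ * T ω))) (T ω) 0 := by
        have h1 : HasDerivAt (fun θ : ℝ => -(θ * T ω)) (-(T ω)) 0 := by
          have h := ((hasDerivAt_id (0:ℝ)).mul_const (T ω)).neg
          simp only [id, one_mul] at h
          exact h
        have h2 := (Real.hasDerivAt_exp (-(0 * T ω))).comp 0 h1
        have h := (hasDerivAt_const 0 (1:ℝ)).sub h2
        simp only [zero_mul, neg_zero, Real.exp_zero, one_mul, zero_sub, neg_neg] at h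
        exact h
      have := hasDerivAt_iff_tendsto_slope.mp hd
      refine (this.mono_left (nhdsWithin_mono 0 ?_)).congr' ?_
      · intro x hx
        exact ne_of_gt hx
      · filter_upwards [self_mem_nhdsWithin] with θ hθ
        simp [slope, hθ, div_eq_inv_mul]
  refine key.congr' ?_
  filter_upwards [self_mem_nhdsWithin] with θ hθ
  have hθ' : (0:ℝ) < θ := hθ
  rw [integral_div, integral_sub (integrable_const 1) (exp_int P T hT0 hTint hθ'.le),
    integral_const]
  simp


/-- Case-1 waiting-time Laplace–Stieltjes transform (equation (22) of the paper):
with `L₁(θ) = E[exp(-θT₁)]`, `L₂(θ) = E[exp(-θT₂)]` and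
`W(θ) = (1/N) ∑_{i=1}^N (λ/(θ+λ))^{N-i} L₁(θ)^N L₂(θ)^{i-1}`, one has `W(0) = 1` and
`(1 - W(θ))/θ → (N-1)/(2λ) + N E[T₁] + ((N-1)/2) E[T₂]` as `θ → 0⁺`
(the case-1 contribution to the mean waiting time in Proposition 3). -/
theorem case1_waiting_time_lst
    {Ω : Type*} [MeasurableSpace Ω] (P : Measure Ω) [IsProbabilityMeasure P]
    (T₁ T₂ : Ω → ℝ) (hT₁0 : ∀ ω, 0 ≤ T₁ ω) (hT₂0 : ∀ ω, 0 ≤ T₂ ω)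
    (hT₁int : Integrable T₁ P) (hT₂int : Integrable T₂ P)
    (lam : ℝ) (hlam : 0 < lam) (N : ℕ) (hN : 1 ≤ N)
    (L₁ L₂ : ℝ → ℝ)
    (hL₁ : ∀ θ, L₁ θ = ∫ ω, Real.exp (-(θ * T₁ ω)) ∂P)
    (hL₂ : ∀ θ, L₂ θ = ∫ ω, Real.exp (-(θ * T₂ ω)) ∂P)
    (W : ℝ → ℝ)
    (hW : ∀ θ, W θ = (1 / N) * ∑ i ∈ Finset.Icc 1 N,
        (lam / (θ + lam)) ^ (N - i) * (L₁ θ) ^ N * (L₂ θ) ^ (i - 1)) :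
    W 0 = 1 ∧
      Filter.Tendsto (fun θ => (1 - W θ) / θ) (nhdsWithin 0 (Set.Ioi 0))
        (nhds (((N : ℝ) - 1) / (2 * lam) + N * (∫ ω, T₁ ω ∂P)
          + (((N : ℝ) - 1) / 2) * ∫ ω, T₂ ω ∂P)) := by
  have hNR : (0:ℝ) < N := by exact_mod_cast Nat.lt_of_lt_of_le Nat.zero_lt_one hN
  set E₁ := ∫ ω, T₁ ω ∂P with hE₁
  set E₂ := ∫ ω, T₂ ω ∂P with hE₂
  -- W 0 = 1
  have hL₁0 : L₁ 0 = 1 := by rw [hL₁]; simp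
  have hL₂0 : L₂ 0 = 1 := by rw [hL₂]; simp
  have hW0 : W 0 = 1 := by
    rw [hW]
    have h1 : lam / (0 + lam) = 1 := by rw [zero_add, div_self hlam.ne']
    simp [h1, hL₁0, hL₂0, Nat.card_Icc]
    field_simp
    simp
  refine ⟨hW0, ?_⟩
  -- basic limits
  have ht0 : Filter.Tendsto (fun θ : ℝ => θ) (nhdsWithin 0 (Set.Ioi 0)) (nhds 0) :=
    Filter.tendsto_id.mono_left nhdsWithin_le_nhds
  have hbE₁ : Filter.Tendsto (fun θ => (1 - L₁ θ) / θ) (nhdsWithin 0 (Set.Ioi 0)) (nhds E₁) :=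
    (lst_slope P T₁ hT₁0 hT₁int).congr (fun θ => by rw [hL₁])
  have hcE₂ : Filter.Tendsto (fun θ => (1 - L₂ θ) / θ) (nhdsWithin 0 (Set.Ioi 0)) (nhds E₂) :=
    (lst_slope P T₂ hT₂0 hT₂int).congr (fun θ => by rw [hL₂])
  have hone : ∀ {L : ℝ → ℝ} {E : ℝ},
      Filter.Tendsto (fun θ => (1 - L θ) / θ) (nhdsWithin 0 (Set.Ioi 0)) (nhds E) →
      Filter.Tendsto L (nhdsWithin 0 (Set.Ioi 0)) (nhds 1) := by
    intro L E hE
    have h : Filter.Tendsto (fun θ : ℝ => 1 - θ * ((1 - L θ) / θ)) (nhdsWithin 0 (Set.Ioi 0))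
        (nhds (1 - 0 * E)) := tendsto_const_nhds.sub (ht0.mul hE)
    rw [show (1:ℝ) - 0 * E = 1 by ring] at h
    refine h.congr' ?_
    filter_upwards [self_mem_nhdsWithin] with θ hθ
    have hθ' : θ ≠ 0 := ne_of_gt hθ
    field_simp
    ring
  have hb1 := hone hbE₁
  have hc1 := hone hcE₂
  have ha1 : Filter.Tendsto (fun θ => lam / (θ + lam)) (nhdsWithin 0 (Set.Ioi 0)) (nhds 1) := by
    have : ContinuousAt (fun θ : ℝ => lam / (θ + lam)) 0 :=
      continuousAt_const.div (continuousAt_id.add continuousAt_const) (by simp [hlam.ne'])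
    have h := this.tendsto.mono_left (nhdsWithin_le_nhds (s := Set.Ioi (0:ℝ)))
    rwa [zero_add, div_self hlam.ne'] at h
  have haA : Filter.Tendsto (fun θ => (1 - lam / (θ + lam)) / θ) (nhdsWithin 0 (Set.Ioi 0))
      (nhds (1 / lam)) := by
    have hc : ContinuousAt (fun θ : ℝ => 1 / (θ + lam)) 0 :=
      continuousAt_const.div (continuousAt_id.add continuousAt_const) (by simp [hlam.ne'])
    have h := hc.tendsto.mono_left (nhdsWithin_le_nhds (s := Set.Ioi (0:ℝ)))
    rw [zero_add] at h
    refine h.congr' ?_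
    filter_upwards [self_mem_nhdsWithin] with θ hθ
    have hθ' : θ ≠ 0 := ne_of_gt hθ
    have hθl : θ + lam ≠ 0 := by
      have : (0:ℝ) < θ := hθ
      intro h; linarith
    field_simp
    ring
  -- per-term limits
  have hterm : ∀ i ∈ Finset.Icc 1 N,
      Filter.Tendsto (fun θ => (1 - (lam / (θ + lam)) ^ (N - i) * (L₁ θ) ^ N
        * (L₂ θ) ^ (i - 1)) / θ) (nhdsWithin 0 (Set.Ioi 0))
        (nhds ((((N - i : ℕ) : ℝ) * (1 / lam) + (N : ℝ) * E₁) + ((i - 1 : ℕ) : ℝ) * E₂)) := by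
    intro i _
    have h1 := pow_aux ha1 haA (N - i)
    have h2 := pow_aux hb1 hbE₁ N
    have h3 := pow_aux hc1 hcE₂ (i - 1)
    have h12 := mul_aux h1.1 h2.1 h1.2 h2.2
    exact (mul_aux h12.1 h3.1 h12.2 h3.2).2
  have hsum := tendsto_finset_sum (Finset.Icc 1 N) hterm
  have htot := (tendsto_const_nhds (x := (1:ℝ)/N)).mul hsum
  -- identify the function
  have hfun : ∀ θ : ℝ, (1 / (N:ℝ)) * ∑ i ∈ Finset.Icc 1 N,
      (1 - (lam / (θ + lam)) ^ (N - i) * (L₁ θ) ^ N * (L₂ θ) ^ (i - 1)) / θ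
      = (1 - W θ) / θ := by
    intro θ
    rw [hW θ, ← Finset.sum_div, Finset.sum_sub_distrib, Finset.sum_const, Nat.card_Icc]
    simp only [Nat.add_sub_cancel, nsmul_eq_mul, mul_one]
    rw [show (1:ℝ) - 1 / N * ∑ i ∈ Finset.Icc 1 N,
        (lam / (θ + lam)) ^ (N - i) * L₁ θ ^ N * L₂ θ ^ (i - 1)
      = (1 / N) * ((N:ℝ) - ∑ i ∈ Finset.Icc 1 N,
        (lam / (θ + lam)) ^ (N - i) * L₁ θ ^ N * L₂ θ ^ (i - 1)) by rw [mul_sub, one_div_mul_cancel hNR.ne']]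
    rw [mul_div_assoc]
  -- identify the limit
  have hlim : (1 / (N:ℝ)) * ∑ i ∈ Finset.Icc 1 N,
      ((((N - i : ℕ) : ℝ) * (1 / lam) + (N : ℝ) * E₁) + ((i - 1 : ℕ) : ℝ) * E₂)
      = ((N : ℝ) - 1) / (2 * lam) + N * E₁ + (((N : ℝ) - 1) / 2) * E₂ := by
    rw [Finset.sum_add_distrib, Finset.sum_add_distrib, ← Finset.sum_mul, ← Finset.sum_mul,
      ← Finset.sum_mul, sum_N_sub, sum_sub_one, Finset.sum_const, Nat.card_Icc]
    simp only [Nat.add_sub_cancel, nsmul_eq_mul]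
    field_simp
  rw [← hlim]
  exact htot.congr hfun
end
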